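/- For every integer N ≥ 1 there exists a function G : ℂ → ℂ that is complex differentiable (holomorphic) at every point of the open strip {z ∈ ℂ : |Im z| < A_N/√2} and satisfies G(z) = F_N(z) at every z in this strip at which exp(2 A_N z e^{-iπ/4}) + 1 ≠ 0 and z² + i t_k² ≠ 0 for all k = 1,…,N (i.e., wherever the defining formula of F_N has nonvanishing denominators). -/

import Mathlib

/-
Write `w₀ = exp (-iπ/4)`, so that `w₀² = -i`. Then `exp (2 A_N z w₀) + 1 = 0` means
`(2 A_N z w₀)² = -((2k-1)π)²` for some `k ≥ 1`, and since `2 A_N t_k = (2k-1)π` this is exactly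
`z² + i t_k² = 0`; the strip `|Im z| < A_N/√2` forces `k ≤ N`. So inside the strip every
singularity `c` of `F_N` is a common simple zero of `exp (2 A_N z w₀) + 1` and of a single
`z² + i t_k²`, and the residues `-1/(2 A_N w₀)` and `exp (iπ/4)/(2 A_N)` of the two terms cancel.
Hence `(z - c) F_N(z) → 0`, and by Riemann's removable singularity theorem
`z ↦ lim_{w → z, w ≠ z} F_N(w)` is holomorphic on the strip.
-/

noncomputable section

/-- `A_N = √((N + 1/2)π)`. -/
def A (N : ℕ) : ℝ := Real.sqrt (((N : ℝ) + 1 / 2) * Real.pi)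

/-- `t_k = (k − 1/2)π/√((N + 1/2)π)`. -/
def tk (N k : ℕ) : ℝ := (((k : ℝ) - 1 / 2) * Real.pi) / Real.sqrt (((N : ℝ) + 1 / 2) * Real.pi)

/-- The modified trapezium rule approximation `F_N(z)`. -/
def FN (N : ℕ) (z : ℂ) : ℂ :=
  1 / (Complex.exp (2 * (A N : ℂ) * z * Complex.exp (-(Real.pi / 4 : ℂ) * Complex.I)) + 1) +
    (z / (A N : ℂ)) * Complex.exp (Complex.I * (z ^ 2 + (Real.pi / 4 : ℂ))) *
      ∑ k ∈ Finset.Icc 1 N,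
        (Real.exp (-(tk N k) ^ 2) : ℂ) / (z ^ 2 + Complex.I * ((tk N k : ℝ) : ℂ) ^ 2)

open Complex Filter Topology Finset
open scoped Real

theorem Complex.differentiableAt_limUnder_nhdsNE {E : Type*} [NormedAddCommGroup E]
    [NormedSpace ℂ E] [CompleteSpace E] {f : ℂ → E} {c : ℂ}
    (hd : ∀ᶠ z in 𝓝[≠] c, DifferentiableAt ℂ f z)
    (ho : Tendsto (fun z => (z - c) • f z) (𝓝[≠] c) (𝓝 0)) :
    DifferentiableAt ℂ (fun z => limUnder (𝓝[≠] z) f) c := by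
  have ho' : (fun z => f z - f c) =o[𝓝[≠] c] fun z => (z - c)⁻¹ := by
    have hsub : Tendsto (fun z => (z - c) • (f z - f c)) (𝓝[≠] c) (𝓝 0) := by
      have hc : Tendsto (fun z => (z - c) • f c) (𝓝[≠] c) (𝓝 0) := by
        simpa using (tendsto_nhdsWithin_of_tendsto_nhds
          (tendsto_sub_nhds_zero_iff.mpr (tendsto_id (x := 𝓝 c)))).smul_const (f c)
      simpa [smul_sub] using ho.sub hc
    refine ((Asymptotics.isBigO_refl (fun z => (z - c)⁻¹) _).smul_isLittleO
      (Asymptotics.isLittleO_one_iff ℂ |>.mpr hsub)).congr' ?_ (by simp)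
    filter_upwards [self_mem_nhdsWithin] with z hz
    rw [smul_smul, inv_mul_cancel₀ (sub_ne_zero.mpr hz), one_smul]
  rw [eventually_nhdsWithin_iff] at hd
  have hdiff : DifferentiableOn ℂ f ({z | z ≠ c → DifferentiableAt ℂ f z} \ {c}) :=
    fun z hz => (hz.1 hz.2).differentiableWithinAt
  refine ((differentiableOn_update_limUnder_of_isLittleO hd hdiff ho').differentiableAt
    hd).congr_of_eventuallyEq ?_
  filter_upwards [hd] with z hz
  rcases eq_or_ne z c with rfl | hzc
  · simp
  · rw [Function.update_of_ne hzc]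
    exact ((hz hzc).continuousAt.tendsto.mono_left nhdsWithin_le_nhds).limUnder_eq

theorem eventually_ne_zero_nhdsNE_of_hasDerivAt {𝕜 : Type*} [NontriviallyNormedField 𝕜]
    {f : 𝕜 → 𝕜} {f' c : 𝕜} (hf : HasDerivAt f f' c) (h : f c = 0 → f' ≠ 0) :
    ∀ᶠ z in 𝓝[≠] c, f z ≠ 0 := by
  by_cases hc : f c = 0
  · exact hf.eventually_ne (h hc)
  · exact (hf.continuousAt.eventually_ne hc).filter_mono nhdsWithin_le_nhds

theorem tendsto_sub_div_of_hasDerivAt {𝕜 : Type*} [NontriviallyNormedField 𝕜] {f : 𝕜 → 𝕜}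
    {f' c : 𝕜} (hf : HasDerivAt f f' c) (hc : f c = 0) (hf' : f' ≠ 0) :
    Tendsto (fun z => (z - c) / f z) (𝓝[≠] c) (𝓝 f'⁻¹) := by
  refine ((hasDerivAt_iff_tendsto_slope.mp hf).inv₀ hf').congr fun z => ?_
  rw [slope_def_field, hc, sub_zero, inv_div]

theorem Complex.exp_eq_neg_one_iff {u : ℂ} :
    exp u = -1 ↔ ∃ k : ℕ, 0 < k ∧ u ^ 2 = -((2 * k - 1) * π) ^ 2 := by
  rw [← exp_pi_mul_I, exp_eq_exp_iff_exists_int]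
  constructor
  · rintro ⟨n, rfl⟩
    rcases le_or_gt 0 n with hn | hn
    · lift n to ℕ using hn
      exact ⟨n + 1, n.succ_pos, by push_cast; linear_combination (2 * n + 1) ^ 2 * π ^ 2 * I_sq⟩
    · obtain ⟨m, rfl⟩ : ∃ m : ℕ, n = -m := ⟨n.natAbs, by omega⟩
      exact ⟨m, by omega, by push_cast; linear_combination (2 * m - 1) ^ 2 * π ^ 2 * I_sq⟩
  · rintro ⟨k, hk, hu⟩
    have : u ^ 2 = ((2 * k - 1) * π * I) ^ 2 := by
      linear_combination hu - (2 * k - 1) ^ 2 * π ^ 2 * I_sq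
    rcases sq_eq_sq_iff_eq_or_eq_neg.mp this with h | h
    · exact ⟨k - 1, by rw [h]; push_cast [Nat.cast_sub hk]; ring⟩
    · exact ⟨-k, by rw [h]; push_cast; ring⟩

theorem Complex.im_sq_of_sq_eq_neg_I_mul {z : ℂ} {r : ℝ} (h : z ^ 2 = -I * r ^ 2) :
    z.im ^ 2 = r ^ 2 / 2 := by
  have hre : z.re ^ 2 - z.im ^ 2 = 0 := by
    simpa [sq] using congrArg re h
  have hnorm : z.re ^ 2 + z.im ^ 2 = r ^ 2 := by
    have := congrArg norm h
    rw [norm_pow, Complex.sq_norm, normSq_apply, norm_mul, norm_neg, norm_I, one_mul, norm_pow,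
      norm_real, Real.norm_eq_abs, sq_abs] at this
    linear_combination this
  linear_combination (hnorm - hre) / 2

def w₀ : ℂ := exp (-(π / 4 : ℂ) * I)

theorem w₀_sq : w₀ ^ 2 = -I := by
  rw [w₀, ← exp_nat_mul, ← exp_neg_pi_div_two_mul_I]
  push_cast
  ring_nf

theorem w₀_mul_exp_pi_div_four_mul_I : w₀ * exp (π / 4 * I) = 1 := by
  rw [w₀, ← exp_add, neg_mul, neg_add_cancel, exp_zero]

def expDenom (N : ℕ) (z : ℂ) : ℂ := exp (2 * A N * z * w₀) + 1

def quadDenom (N k : ℕ) (z : ℂ) : ℂ := z ^ 2 + I * (tk N k : ℂ) ^ 2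

def prefactor (N : ℕ) (z : ℂ) : ℂ := z / A N * exp (I * (z ^ 2 + π / 4))

theorem FN_eq (N : ℕ) (z : ℂ) :
    FN N z = 1 / expDenom N z +
      prefactor N z * ∑ k ∈ Icc 1 N, (Real.exp (-tk N k ^ 2) : ℂ) / quadDenom N k z :=
  rfl

theorem A_pos (N : ℕ) : 0 < A N :=
  Real.sqrt_pos.mpr (by positivity)

theorem two_mul_A_sq (N : ℕ) : 2 * A N ^ 2 = (2 * N + 1) * π := by
  rw [A, Real.sq_sqrt (by positivity)]
  ring

theorem two_mul_A_mul_tk (N k : ℕ) : 2 * A N * tk N k = (2 * k - 1) * π := by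
  rw [tk, ← A]
  field_simp [(A_pos N).ne']

theorem tk_pos {N k : ℕ} (hk : 0 < k) : 0 < tk N k := by
  have h := two_mul_A_mul_tk N k
  have : (1 : ℝ) ≤ k := by exact_mod_cast hk
  nlinarith [A_pos N, Real.pi_pos]

theorem tk_ne_zero (N k : ℕ) : tk N k ≠ 0 := by
  intro h
  have := two_mul_A_mul_tk N k
  rw [h, mul_zero, eq_comm, mul_eq_zero] at this
  rcases this with h | h
  · have : (2 * k : ℝ) = 1 := by linarith
    norm_cast at this
    omega
  · exact Real.pi_ne_zero h

theorem hasDerivAt_expDenom (N : ℕ) (z : ℂ) :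
    HasDerivAt (expDenom N) (2 * A N * w₀ * exp (2 * A N * z * w₀)) z := by
  have h : HasDerivAt (fun z : ℂ => 2 * A N * z * w₀) (2 * A N * w₀) z := by
    simpa using ((hasDerivAt_id z).const_mul (2 * (A N : ℂ))).mul_const w₀
  exact (h.cexp.add_const 1).congr_deriv (by ring)

theorem hasDerivAt_quadDenom (N k : ℕ) (z : ℂ) : HasDerivAt (quadDenom N k) (2 * z) z :=
  ((hasDerivAt_pow 2 z).add_const _).congr_deriv (by norm_num)

theorem quadDenom_eq_zero_iff {N k : ℕ} {z : ℂ} :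
    quadDenom N k z = 0 ↔ (2 * A N * z * w₀) ^ 2 = -((2 * k - 1) * π) ^ 2 := by
  have hA : (A N : ℂ) ≠ 0 := ofReal_ne_zero.mpr (A_pos N).ne'
  have ht : (2 * A N * tk N k : ℂ) = (2 * k - 1) * π := by exact_mod_cast two_mul_A_mul_tk N k
  rw [quadDenom, ← ht]
  constructor
  · intro h
    linear_combination (-4 * I * A N ^ 2) * h + 4 * A N ^ 2 * z ^ 2 * w₀_sq
      + 4 * A N ^ 2 * (tk N k : ℂ) ^ 2 * I_sq
  · intro h
    have : (-4 * I * A N ^ 2) * (z ^ 2 + I * (tk N k : ℂ) ^ 2) = 0 := by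
      linear_combination h - 4 * A N ^ 2 * z ^ 2 * w₀_sq - 4 * A N ^ 2 * (tk N k : ℂ) ^ 2 * I_sq
    simpa [hA, I_ne_zero] using this

theorem expDenom_eq_zero_of_quadDenom_eq_zero {N k : ℕ} (hk : 0 < k) {z : ℂ}
    (h : quadDenom N k z = 0) : expDenom N z = 0 := by
  rw [expDenom, exp_eq_neg_one_iff.mpr ⟨k, hk, quadDenom_eq_zero_iff.mp h⟩, neg_add_cancel]

theorem le_of_quadDenom_eq_zero {N k : ℕ} {z : ℂ} (hz : |z.im| < A N / √2)
    (h : quadDenom N k z = 0) : k ≤ N := by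
  have him : z.im ^ 2 = tk N k ^ 2 / 2 :=
    im_sq_of_sq_eq_neg_I_mul (by rw [quadDenom] at h; linear_combination h)
  have hz2 : z.im ^ 2 < A N ^ 2 / 2 := by
    calc z.im ^ 2 = |z.im| ^ 2 := (sq_abs _).symm
      _ < (A N / √2) ^ 2 := by gcongr
      _ = A N ^ 2 / 2 := by rw [div_pow, Real.sq_sqrt zero_le_two]
  have hsq : ((2 * k - 1) * π) ^ 2 < ((2 * N + 1) * π) ^ 2 := by
    rw [← two_mul_A_mul_tk, ← two_mul_A_sq]
    nlinarith [A_pos N]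
  have hlt : (2 * k - 1) * π < (2 * N + 1) * π :=
    (le_abs_self _).trans_lt (abs_lt_of_sq_lt_sq hsq (by positivity))
  have : (k : ℝ) < N + 1 := by nlinarith [Real.pi_pos]
  exact Nat.lt_succ_iff.mp (by exact_mod_cast this)

theorem exists_quadDenom_eq_zero {N : ℕ} {z : ℂ} (hz : |z.im| < A N / √2)
    (h : expDenom N z = 0) : ∃ k ∈ Icc 1 N, quadDenom N k z = 0 := by
  obtain ⟨k, hk, hsq⟩ := exp_eq_neg_one_iff.mp (eq_neg_of_add_eq_zero_left h)
  have hzero := quadDenom_eq_zero_iff.mpr hsq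
  exact ⟨k, mem_Icc.mpr ⟨hk, le_of_quadDenom_eq_zero hz hzero⟩, hzero⟩

theorem quadDenom_ne_zero_of_ne {N j k : ℕ} (hj : 0 < j) (hk : 0 < k) (hjk : j ≠ k) {z : ℂ}
    (h : quadDenom N k z = 0) : quadDenom N j z ≠ 0 := by
  intro h'
  have hsq : (tk N j : ℂ) ^ 2 = (tk N k : ℂ) ^ 2 := by
    have : I * ((tk N j : ℂ) ^ 2 - (tk N k : ℂ) ^ 2) = 0 := by
      rw [quadDenom] at h h'; linear_combination h' - h
    simpa [I_ne_zero, sub_eq_zero] using this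
  have heq : tk N j = tk N k := by
    rw [← sq_eq_sq₀ (tk_pos hj).le (tk_pos hk).le]
    exact_mod_cast hsq
  have := two_mul_A_mul_tk N j
  rw [heq, two_mul_A_mul_tk] at this
  have : (j : ℝ) = k := by linarith [mul_right_cancel₀ Real.pi_ne_zero this]
  exact hjk (by exact_mod_cast this)

theorem ne_zero_of_quadDenom_eq_zero {N k : ℕ} {c : ℂ} (hP : quadDenom N k c = 0) : c ≠ 0 := by
  rintro rfl
  simp [quadDenom, I_ne_zero, tk_ne_zero] at hP

theorem differentiable_prefactor (N : ℕ) : Differentiable ℂ (prefactor N) := by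
  unfold prefactor
  fun_prop

theorem differentiableAt_FN {N : ℕ} {z : ℂ} (hQ : expDenom N z ≠ 0)
    (hP : ∀ k ∈ Icc 1 N, quadDenom N k z ≠ 0) : DifferentiableAt ℂ (FN N) z := by
  rw [show FN N = _ from funext (FN_eq N)]
  refine ((differentiableAt_const 1).div (hasDerivAt_expDenom N z).differentiableAt hQ).add
    ((differentiable_prefactor N z).mul (DifferentiableAt.fun_sum fun k hk => ?_))
  exact (differentiableAt_const _).div (hasDerivAt_quadDenom N k z).differentiableAt (hP k hk)

theorem eventually_differentiableAt_FN (N : ℕ) (c : ℂ) :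
    ∀ᶠ z in 𝓝[≠] c, DifferentiableAt ℂ (FN N) z := by
  have hQ : ∀ᶠ z in 𝓝[≠] c, expDenom N z ≠ 0 :=
    eventually_ne_zero_nhdsNE_of_hasDerivAt (hasDerivAt_expDenom N c) fun _ => by
      simp [(A_pos N).ne', w₀, exp_ne_zero]
  have hP : ∀ᶠ z in 𝓝[≠] c, ∀ k ∈ Icc 1 N, quadDenom N k z ≠ 0 :=
    (eventually_all_finset _).mpr fun k _ =>
      eventually_ne_zero_nhdsNE_of_hasDerivAt (hasDerivAt_quadDenom N k c) fun hc =>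
        mul_ne_zero two_ne_zero (ne_zero_of_quadDenom_eq_zero hc)
  filter_upwards [hQ, hP] with z using differentiableAt_FN

theorem residues_cancel {N k : ℕ} {c : ℂ} (hQ : expDenom N c = 0)
    (hP : quadDenom N k c = 0) :
    (2 * A N * w₀ * exp (2 * A N * c * w₀))⁻¹ +
      prefactor N c * (Real.exp (-tk N k ^ 2) * (2 * c)⁻¹) = 0 := by
  have hc := ne_zero_of_quadDenom_eq_zero hP
  have hexp : exp (I * (c ^ 2 + π / 4)) * Real.exp (-tk N k ^ 2) = exp (π / 4 * I) := by
    rw [ofReal_exp, ← exp_add]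
    congr 1
    push_cast
    rw [quadDenom] at hP
    linear_combination I * hP - (tk N k : ℂ) ^ 2 * I_sq
  have hres : prefactor N c * (Real.exp (-tk N k ^ 2) * (2 * c)⁻¹) = (2 * A N * w₀)⁻¹ := by
    rw [prefactor, eq_inv_of_mul_eq_one_left w₀_mul_exp_pi_div_four_mul_I, ← hexp]
    field_simp
  rw [eq_neg_of_add_eq_zero_left hQ, hres, mul_neg_one, inv_neg, neg_add_cancel]

theorem tendsto_sub_mul_FN_of_pole {N k : ℕ} (hk : k ∈ Icc 1 N) {c : ℂ}
    (hQ : expDenom N c = 0) (hP : quadDenom N k c = 0) :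
    Tendsto (fun w => (w - c) * FN N w) (𝓝[≠] c) (𝓝 0) := by
  set R : ℂ → ℂ := fun w =>
    ∑ j ∈ (Icc 1 N).erase k, (Real.exp (-tk N j ^ 2) : ℂ) / quadDenom N j w
  have hR : ContinuousAt R c := by
    refine (DifferentiableAt.fun_sum fun j hj => (differentiableAt_const _).div
      (hasDerivAt_quadDenom N j c).differentiableAt ?_).continuousAt
    obtain ⟨hjk, hj⟩ := mem_erase.mp hj
    exact quadDenom_ne_zero_of_ne (mem_Icc.mp hj).1 (mem_Icc.mp hk).1 hjk hP
  have hRlim : Tendsto (fun w => (w - c) * R w) (𝓝[≠] c) (𝓝 0) := by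
    have : ContinuousAt (fun w => (w - c) * R w) c := by fun_prop
    simpa using this.tendsto.mono_left nhdsWithin_le_nhds
  have hlim : Tendsto (fun w => (w - c) / expDenom N w + prefactor N w *
      (Real.exp (-tk N k ^ 2) * ((w - c) / quadDenom N k w) + (w - c) * R w)) (𝓝[≠] c)
      (𝓝 ((2 * A N * w₀ * exp (2 * A N * c * w₀))⁻¹ +
        prefactor N c * (Real.exp (-tk N k ^ 2) * (2 * c)⁻¹ + 0))) :=
    (tendsto_sub_div_of_hasDerivAt (hasDerivAt_expDenom N c) hQ
      (by simp [(A_pos N).ne', w₀, exp_ne_zero])).add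
    ((differentiable_prefactor N c).continuousAt.tendsto.mono_left nhdsWithin_le_nhds |>.mul
      (((tendsto_sub_div_of_hasDerivAt (hasDerivAt_quadDenom N k c) hP
        (mul_ne_zero two_ne_zero (ne_zero_of_quadDenom_eq_zero hP))).const_mul _).add hRlim))
  rw [add_zero, residues_cancel hQ hP] at hlim
  refine hlim.congr fun w => ?_
  rw [FN_eq, ← add_sum_erase _ _ hk]
  ring

theorem tendsto_sub_mul_FN {N : ℕ} {c : ℂ} (hc : |c.im| < A N / √2) :
    Tendsto (fun w => (w - c) * FN N w) (𝓝[≠] c) (𝓝 0) := by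
  by_cases hQ : expDenom N c = 0
  · obtain ⟨k, hk, hP⟩ := exists_quadDenom_eq_zero hc hQ
    exact tendsto_sub_mul_FN_of_pole hk hQ hP
  have hP : ∀ k ∈ Icc 1 N, quadDenom N k c ≠ 0 := fun k hk hP =>
    hQ (expDenom_eq_zero_of_quadDenom_eq_zero (mem_Icc.mp hk).1 hP)
  have : ContinuousAt (fun w => (w - c) * FN N w) c :=
    (continuousAt_id.sub continuousAt_const).mul (differentiableAt_FN hQ hP).continuousAt
  simpa using this.tendsto.mono_left nhdsWithin_le_nhds

theorem stmt_10_general (N : ℕ) :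
    ∃ G : ℂ → ℂ,
      (∀ z : ℂ, |z.im| < A N / Real.sqrt 2 → DifferentiableAt ℂ G z) ∧
      (∀ z : ℂ, |z.im| < A N / Real.sqrt 2 →
        Complex.exp (2 * (A N : ℂ) * z * Complex.exp (-(Real.pi / 4 : ℂ) * Complex.I)) + 1 ≠ 0 →
        (∀ k ∈ Finset.Icc 1 N, z ^ 2 + Complex.I * ((tk N k : ℝ) : ℂ) ^ 2 ≠ 0) →
        G z = FN N z) := by
  refine ⟨fun z => limUnder (𝓝[≠] z) (FN N), fun z hz => ?_, fun z _ hQ hP => ?_⟩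
  · exact differentiableAt_limUnder_nhdsNE (eventually_differentiableAt_FN N z)
      (tendsto_sub_mul_FN hz)
  · exact ((differentiableAt_FN hQ hP).continuousAt.tendsto.mono_left
      nhdsWithin_le_nhds).limUnder_eq

theorem stmt_10 (N : ℕ) (hN : 1 ≤ N) :
    ∃ G : ℂ → ℂ,
      (∀ z : ℂ, |z.im| < A N / Real.sqrt 2 → DifferentiableAt ℂ G z) ∧
      (∀ z : ℂ, |z.im| < A N / Real.sqrt 2 →
        Complex.exp (2 * (A N : ℂ) * z * Complex.exp (-(Real.pi / 4 : ℂ) * Complex.I)) + 1 ≠ 0 →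
        (∀ k ∈ Finset.Icc 1 N, z ^ 2 + Complex.I * ((tk N k : ℝ) : ℂ) ^ 2 ≠ 0) →
        G z = FN N z) :=
  stmt_10_general N

end
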